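/- Let n ≥ 2 and let η_n = d_1⋯d_n(10)^∞ be a sequence with d_{n−1}d_n = 01 such that (η_n)_{q_2} has exactly two distinct q_2-expansions. If d_1d_2 = 01, then both (0η_n)_{q_2} and (1η_n)_{q_2} have exactly two distinct q_2-expansions. -/

import Mathlib

/-!
Write `x = (η_n)_{q₂}`. Since `d₁ = 0`, `x < 1`, so every expansion of `x / q₂ = (0η_n)_{q₂}`
starts with `0`, and removing that digit is a bijection onto the expansions of `x`. Likewise
every expansion of `(1 + x) / q₂ = (1η_n)_{q₂}` starts with `1` as soon as `(1 + x)(q₂ - 1) > 1`.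
If this inequality failed, `x` would be small enough to have an expansion starting with `00`,
while the tail `01(10)^∞` of `η_n` lies in the switch region `[1/q₂, 1/(q₂ - 1)]` and can be
replaced by an expansion starting with `1`; as `d₂ = 1`, these and `η_n` are three different
expansions of `x`. For `n = 2` the inequality is a numerical check on `(01(10)^∞)_{q₂}`.
-/


open Set

/-- The value `∑ dᵢ / qⁱ` (i ≥ 1) of a digit sequence `d` in base `q`
(here `d i` is the digit `d_{i+1}` of the paper). -/
noncomputable def expVal (q : ℝ) (d : ℕ → ℕ) : ℝ := ∑' i : ℕ, (d i : ℝ) / q ^ (i + 1)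

/-- The set of `q`-expansions of `x`: 0-1 digit sequences whose value in base `q` is `x`. -/
def expansions (q x : ℝ) : Set (ℕ → ℕ) := {d | (∀ i, d i ≤ 1) ∧ expVal q d = x}

/-- The map `T_{q,s}(x) = qx - s`. -/
def Tmap (q : ℝ) (s : ℕ) (x : ℝ) : ℝ := q * x - s

/-- `T_{q,d₁⋯dₙ} = T_{q,d₁} ∘ ⋯ ∘ T_{q,dₙ}` (the identity for the empty word). -/
def Tword (q : ℝ) (w : List ℕ) (x : ℝ) : ℝ := w.foldr (fun s y => Tmap q s y) x

/-- The switch region `S_q = [1/q, 1/(q²-q)]`. -/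
def switchRegion (q : ℝ) : Set ℝ := Set.Icc (1 / q) (1 / (q ^ 2 - q))

/-- `A₁(q)`: points of the switch region for which both `T_{q,0}(x)` and `T_{q,1}(x)`
have finitely many `q`-expansions. -/
def A1set (q : ℝ) : Set ℝ :=
  {x ∈ switchRegion q | (expansions q (Tmap q 0 x)).Finite ∧ (expansions q (Tmap q 1 x)).Finite}

/-- `A₂(q)`: points of the switch region for which exactly one of `T_{q,0}(x)`, `T_{q,1}(x)`
has finitely many `q`-expansions. -/
def A2set (q : ℝ) : Set ℝ :=
  {x ∈ switchRegion q | Xor' (expansions q (Tmap q 0 x)).Finite (expansions q (Tmap q 1 x)).Finite}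

/-- `A₃(q)`: points of the switch region for which both `T_{q,0}(x)` and `T_{q,1}(x)`
have infinitely many `q`-expansions. -/
def A3set (q : ℝ) : Set ℝ :=
  {x ∈ switchRegion q | (expansions q (Tmap q 0 x)).Infinite ∧ (expansions q (Tmap q 1 x)).Infinite}

/-- `x` is a `q`-null infinite point: it has infinitely many `q`-expansions and every
branching point of `x` (an image `T_{q,d₁⋯dₙ}(x)` lying in `A₂(q) ∪ A₃(q)`) lies in `A₂(q)`. -/
def IsNullInfinite (q x : ℝ) : Prop :=
  (expansions q x).Infinite ∧
    ∀ w : List ℕ, (∀ s ∈ w, s ≤ 1) →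
      Tword q w x ∈ A2set q ∪ A3set q → Tword q w x ∈ A2set q

/-- The interval `J_q = [(q+q²)/(q⁴-1), (1+q³)/(q⁴-1)]`. -/
def Jset (q : ℝ) : Set ℝ := Set.Icc ((q + q ^ 2) / (q ^ 4 - 1)) ((1 + q ^ 3) / (q ^ 4 - 1))

/-- `B_m` (for a finite `m`): the set of `q ∈ (1,2)` such that some `x ∈ [0, 1/(q-1)]`
has exactly `m` different `q`-expansions. -/
def Bset (m : ℕ) : Set ℝ :=
  {q | q ∈ Set.Ioo (1 : ℝ) 2 ∧
    ∃ x ∈ Set.Icc (0 : ℝ) (1 / (q - 1)), Cardinal.mk ↥(expansions q x) = (m : Cardinal)}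

/-- `B_{ℵ₀}`: the set of `q ∈ (1,2)` such that some `x ∈ [0, 1/(q-1)]` has exactly
countably infinitely many different `q`-expansions. -/
def BalephSet : Set ℝ :=
  {q | q ∈ Set.Ioo (1 : ℝ) 2 ∧
    ∃ x ∈ Set.Icc (0 : ℝ) (1 / (q - 1)), Cardinal.mk ↥(expansions q x) = Cardinal.aleph0}

/-- `U_k`: the set of `x ∈ [0, 1/(q-1)]` having exactly `k` different `q`-expansions. -/
def Uset (q : ℝ) (k : ℕ) : Set ℝ :=
  {x ∈ Set.Icc (0 : ℝ) (1 / (q - 1)) | Cardinal.mk ↥(expansions q x) = (k : Cardinal)}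

/-- `ε_k = (01)^k (10)^∞`; in particular `eps 0 = (10)^∞`. -/
def eps (k : ℕ) : ℕ → ℕ := fun i => if i < 2 * k then i % 2 else (i - 2 * k + 1) % 2

/-- Prepend the digit `s`, repeated `m` times, to the digit sequence `d`. -/
def prep (s m : ℕ) (d : ℕ → ℕ) : ℕ → ℕ := fun i => if i < m then s else d (i - m)

/-- Reflection of a digit sequence: each digit `d` is replaced by `1 - d`. -/
def reflSeq (d : ℕ → ℕ) : ℕ → ℕ := fun i => 1 - d i

/-- Concatenation of a finite word with an infinite digit sequence. -/
def seqCat (w : List ℕ) (t : ℕ → ℕ) : ℕ → ℕ :=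
  fun i => if i < w.length then w.getD i 0 else t (i - w.length)

/-- The sets `E_m` of the paper: for odd `m` (`m = 1, 3`),
`E_m = ⋃_{k≥1} {(01^{m+1}ε_k)_q, (10^m ε_k)_q} \ {(10ε₁)_q}`; for even `m` (`m = 2, 4`),
`E_m = {(01^m(10)^∞)_q} ∪ ⋃_{k≥1} {(01^{m+1}ε_k)_q, (10^m ε_k)_q}`. -/
noncomputable def Eset (q : ℝ) (m : ℕ) : Set ℝ :=
  if m % 2 = 1 then
    (⋃ k : ℕ, {expVal q (prep 0 1 (prep 1 (m + 1) (eps (k + 1)))),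
               expVal q (prep 1 1 (prep 0 m (eps (k + 1))))}) \
      {expVal q (prep 1 1 (prep 0 1 (eps 1)))}
  else
    {expVal q (prep 0 1 (prep 1 m (eps 0)))} ∪
      ⋃ k : ℕ, {expVal q (prep 0 1 (prep 1 (m + 1) (eps (k + 1)))),
                expVal q (prep 1 1 (prep 0 m (eps (k + 1))))}

open Cardinal Filter Topology

section Expansions

variable {q y : ℝ} {d e : ℕ → ℕ}

lemma hasSum_one_div_pow_succ (hq : 1 < q) :
    HasSum (fun i : ℕ => 1 / q ^ (i + 1)) (1 / (q - 1)) := by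
  have hq0 : 0 < q := by linarith
  have h := (hasSum_geometric_of_lt_one (r := 1 / q) (by positivity)
    ((div_lt_one hq0).2 hq)).mul_left (1 / q)
  have hqm : q - 1 ≠ 0 := by linarith
  have hterm : (fun i : ℕ => 1 / q ^ (i + 1)) = fun i => 1 / q * (1 / q) ^ i := by
    ext i; rw [pow_succ, div_pow, one_pow]; field_simp
  have hsum : 1 / (q - 1) = 1 / q * (1 - 1 / q)⁻¹ := by field_simp
  rwa [hterm, hsum]

lemma digit_div_pow_le (hq : 1 < q) (hd : ∀ i, d i ≤ 1) (i : ℕ) :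
    (d i : ℝ) / q ^ (i + 1) ≤ 1 / q ^ (i + 1) :=
  div_le_div_of_nonneg_right (by exact_mod_cast hd i) (by positivity)

lemma summable_expVal (hq : 1 < q) (hd : ∀ i, d i ≤ 1) :
    Summable fun i : ℕ => (d i : ℝ) / q ^ (i + 1) :=
  (hasSum_one_div_pow_succ hq).summable.of_nonneg_of_le (fun i => by positivity)
    (digit_div_pow_le hq hd)

lemma expVal_nonneg (hq : 0 < q) (d : ℕ → ℕ) : 0 ≤ expVal q d :=
  tsum_nonneg fun i => by positivity

lemma expVal_le (hq : 1 < q) (hd : ∀ i, d i ≤ 1) : expVal q d ≤ 1 / (q - 1) :=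
  hasSum_le (digit_div_pow_le hq hd) (summable_expVal hq hd).hasSum (hasSum_one_div_pow_succ hq)

lemma prep_le_one {s : ℕ} (hs : s ≤ 1) (hd : ∀ i, d i ≤ 1) (m i : ℕ) : prep s m d i ≤ 1 := by
  unfold prep; split
  exacts [hs, hd _]

lemma prep_head_tail (e : ℕ → ℕ) : prep (e 0) 1 (fun i => e (i + 1)) = e := by
  funext i; rcases i with _ | i <;> simp [prep]

lemma prep_one_injective (s : ℕ) : Function.Injective (prep s 1) := fun a b h =>
  funext fun i => by simpa [prep] using congrFun h (i + 1)

lemma expVal_eq_sum_range_add (hq : 1 < q) (hd : ∀ i, d i ≤ 1) (k : ℕ) :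
    expVal q d = ∑ i ∈ Finset.range k, (d i : ℝ) / q ^ (i + 1)
      + expVal q (fun i => d (i + k)) / q ^ k := by
  rw [expVal, ← (summable_expVal hq hd).sum_add_tsum_nat_add k, expVal, ← tsum_div_const]
  congr 1
  refine tsum_congr fun i => ?_
  rw [div_div, ← pow_add]
  ring_nf

lemma expVal_prep_one (hq : 1 < q) {s : ℕ} (hs : s ≤ 1) (hd : ∀ i, d i ≤ 1) :
    expVal q (prep s 1 d) = (s + expVal q d) / q := by
  have htail : (fun i => prep s 1 d (i + 1)) = d := rfl
  rw [expVal_eq_sum_range_add hq (prep_le_one hs hd 1) 1, Finset.sum_range_one, htail,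
    pow_one, ← add_div]
  rfl

lemma prep_mem_expansions (hq : 1 < q) {s : ℕ} (hs : s ≤ 1) (hd : d ∈ expansions q y) :
    prep s 1 d ∈ expansions q ((s + y) / q) :=
  ⟨prep_le_one hs hd.1 1, by rw [expVal_prep_one hq hs hd.1, hd.2]⟩

lemma expVal_eq_head_add_tail (hq : 1 < q) (hd : ∀ i, d i ≤ 1) :
    expVal q d = (d 0 + expVal q fun i => d (i + 1)) / q := by
  rw [← expVal_prep_one hq (hd 0) fun i => hd _, prep_head_tail]

lemma tail_mem_expansions (hq : 1 < q) (he : e ∈ expansions q y) :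
    (fun i => e (i + 1)) ∈ expansions q (q * y - e 0) := by
  refine ⟨fun i => he.1 _, ?_⟩
  rw [← he.2, expVal_eq_head_add_tail hq he.1]
  field_simp
  ring

lemma expansions_eq_image_prep_zero (hq : 1 < q) (hy : y < 1 / q) :
    expansions q y = prep 0 1 '' expansions q (q * y) := by
  have hq0 : 0 < q := by linarith
  ext e
  refine ⟨fun he => ?_, ?_⟩
  · have htail := tail_mem_expansions hq he
    have hy' := he.2 ▸ expVal_eq_head_add_tail hq he.1
    have h0 : e 0 = 0 := by
      by_contra h
      have hval : y = (1 + expVal q fun i => e (i + 1)) / q := by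
        rw [hy', show e 0 = 1 by have := he.1 0; omega, Nat.cast_one]
      have := expVal_nonneg hq0 fun i => e (i + 1)
      rw [hval] at hy
      linarith [(div_lt_div_iff_of_pos_right hq0).1 hy]
    refine ⟨_, ?_, h0 ▸ prep_head_tail e⟩
    simpa [h0] using htail
  · rintro ⟨d, hd, rfl⟩
    simpa [hq0.ne'] using prep_mem_expansions hq zero_le_one hd

lemma expansions_eq_image_prep_one (hq : 1 < q) (hy : 1 / (q * (q - 1)) < y) :
    expansions q y = prep 1 1 '' expansions q (q * y - 1) := by
  have hq0 : 0 < q := by linarith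
  ext e
  refine ⟨fun he => ?_, ?_⟩
  · have htail := tail_mem_expansions hq he
    have hy' := he.2 ▸ expVal_eq_head_add_tail hq he.1
    have h0 : e 0 = 1 := by
      by_contra h
      have hval : y = (expVal q fun i => e (i + 1)) / q := by
        rw [hy', show e 0 = 0 by have := he.1 0; omega, Nat.cast_zero, zero_add]
      have htail_le := (le_div_iff₀ (by linarith)).1 (expVal_le hq htail.1)
      rw [hval, div_lt_div_iff₀ (by nlinarith) hq0] at hy
      nlinarith
    refine ⟨_, ?_, h0 ▸ prep_head_tail e⟩
    simpa [h0] using htail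
  · rintro ⟨d, hd, rfl⟩
    simpa [hq0.ne'] using prep_mem_expansions hq le_rfl hd

end Expansions

section Greedy

variable {q v : ℝ}

noncomputable def greedyDigit (q y : ℝ) : ℕ := if 1 ≤ q * y then 1 else 0

noncomputable def greedyRem (q v : ℝ) : ℕ → ℝ
  | 0 => v
  | k + 1 => q * greedyRem q v k - greedyDigit q (greedyRem q v k)

lemma greedyDigit_le_one (q y : ℝ) : greedyDigit q y ≤ 1 := by
  unfold greedyDigit; split <;> omega

lemma greedyRem_mem_Icc (hq1 : 1 < q) (hq2 : q ≤ 2) (hv : v ∈ Icc 0 (1 / (q - 1))) (k : ℕ) :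
    greedyRem q v k ∈ Icc 0 (1 / (q - 1)) := by
  induction k with
  | zero => exact hv
  | succ k ih =>
    obtain ⟨h0, h1⟩ := ih
    have hqm : 0 < q - 1 := by linarith
    rw [le_div_iff₀ hqm] at h1
    simp only [greedyRem, greedyDigit, mem_Icc, le_div_iff₀ hqm]
    split_ifs with h
    · constructor <;> push_cast <;> nlinarith
    · constructor <;> push_cast <;> nlinarith

lemma sum_greedyDigit_add_greedyRem (q v : ℝ) (hq : 0 < q) (k : ℕ) :
    ∑ i ∈ Finset.range k, (greedyDigit q (greedyRem q v i) : ℝ) / q ^ (i + 1)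
      + greedyRem q v k / q ^ k = v := by
  induction k with
  | zero => simp [greedyRem]
  | succ k ih =>
    refine Eq.trans ?_ ih
    rw [Finset.sum_range_succ, greedyRem, pow_succ]
    field_simp
    ring

lemma expansions_nonempty (hq1 : 1 < q) (hq2 : q ≤ 2) (hv : v ∈ Icc 0 (1 / (q - 1))) :
    (expansions q v).Nonempty := by
  have hq0 : 0 < q := by linarith
  set d : ℕ → ℕ := fun k => greedyDigit q (greedyRem q v k)
  have hd : ∀ i, d i ≤ 1 := fun i => greedyDigit_le_one _ _
  refine ⟨d, hd, tendsto_nhds_unique (summable_expVal hq1 hd).hasSum.tendsto_sum_nat ?_⟩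
  have hrem : Tendsto (fun k => greedyRem q v k / q ^ k) atTop (𝓝 0) := by
    have hgeom : Tendsto (fun k : ℕ => 1 / (q - 1) * (1 / q) ^ k) atTop (𝓝 0) := by
      simpa using (tendsto_pow_atTop_nhds_zero_of_lt_one (by positivity)
        ((div_lt_one hq0).2 hq1)).const_mul (1 / (q - 1))
    refine squeeze_zero (fun k => div_nonneg (greedyRem_mem_Icc hq1 hq2 hv k).1 (by positivity))
      (fun k => ?_) hgeom
    rw [div_pow, one_pow, mul_one_div]
    exact div_le_div_of_nonneg_right (greedyRem_mem_Icc hq1 hq2 hv k).2 (by positivity)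
  have hpartial : (fun k => ∑ i ∈ Finset.range k, (d i : ℝ) / q ^ (i + 1))
      = fun k => v - greedyRem q v k / q ^ k :=
    funext fun k => eq_sub_of_add_eq (sum_greedyDigit_add_greedyRem q v hq0 k)
  rw [hpartial]
  simpa using (tendsto_const_nhds (x := v)).sub hrem

end Greedy

section Branching

variable {q x y : ℝ} {d e : ℕ → ℕ}

lemma exists_mem_expansions_head_zero (hq1 : 1 < q) (hq2 : q ≤ 2) (hy0 : 0 ≤ y)
    (hy : y ≤ 1 / (q * (q - 1))) : ∃ d ∈ expansions q y, d 0 = 0 := by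
  have hq0 : 0 < q := by linarith
  rw [mul_comm q, ← div_div, le_div_iff₀ hq0, mul_comm] at hy
  obtain ⟨d, hd⟩ := expansions_nonempty hq1 hq2 (v := q * y) ⟨by positivity, hy⟩
  exact ⟨prep 0 1 d, by simpa [hq0.ne'] using prep_mem_expansions hq1 zero_le_one hd, rfl⟩

lemma exists_mem_expansions_head_one (hq1 : 1 < q) (hq2 : q ≤ 2) (hy1 : 1 / q ≤ y)
    (hy : y ≤ 1 / (q - 1)) : ∃ d ∈ expansions q y, d 0 = 1 := by
  have hq0 : 0 < q := by linarith
  have hqm : 0 < q - 1 := by linarith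
  rw [div_le_iff₀ hq0] at hy1
  rw [le_div_iff₀ hqm] at hy
  obtain ⟨d, hd⟩ := expansions_nonempty hq1 hq2 (v := q * y - 1)
    ⟨by linarith, by rw [le_div_iff₀ hqm]; nlinarith⟩
  refine ⟨prep 1 1 d, ?_, rfl⟩
  simpa [hq0.ne'] using prep_mem_expansions hq1 le_rfl hd

lemma exists_mem_expansions_digit_eq_one (hq1 : 1 < q) (hq2 : q ≤ 2) (he : e ∈ expansions q x)
    (m : ℕ) (htail : 1 / q ≤ expVal q fun i => e (i + m)) :
    ∃ e' ∈ expansions q x, e' m = 1 ∧ ∀ i < m, e' i = e i := by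
  obtain ⟨d, hd, hd0⟩ :=
    exists_mem_expansions_head_one hq1 hq2 htail (expVal_le hq1 fun i => he.1 _)
  set e' : ℕ → ℕ := fun i => if i < m then e i else d (i - m)
  have he' : ∀ i, e' i ≤ 1 := fun i => by
    simp only [e']; split
    exacts [he.1 i, hd.1 _]
  have htail' : (fun i => e' (i + m)) = d := funext fun i => by simp [e']
  refine ⟨e', ⟨he', ?_⟩, by simp [e', hd0], fun i hi => if_pos hi⟩
  rw [expVal_eq_sum_range_add hq1 he' m, htail', hd.2, ← he.2,
    expVal_eq_sum_range_add hq1 he.1 m]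
  congr 1
  exact Finset.sum_congr rfl fun i hi => by simp [e', Finset.mem_range.1 hi]

lemma mk_expansions_prep_zero (hq : 1 < q) (hd : ∀ i, d i ≤ 1) (hx : expVal q d < 1) :
    #(expansions q (expVal q (prep 0 1 d))) = #(expansions q (expVal q d)) := by
  have hq0 : 0 < q := by linarith
  rw [expVal_prep_one hq zero_le_one hd, Nat.cast_zero, zero_add,
    expansions_eq_image_prep_zero hq ((div_lt_div_iff_of_pos_right hq0).2 hx),
    mul_div_cancel₀ _ hq0.ne', mk_image_eq (prep_one_injective 0)]

lemma mk_expansions_prep_one (hq : 1 < q) (hd : ∀ i, d i ≤ 1)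
    (hx : 1 / (q - 1) < 1 + expVal q d) :
    #(expansions q (expVal q (prep 1 1 d))) = #(expansions q (expVal q d)) := by
  have hq0 : 0 < q := by linarith
  have hy : 1 / (q * (q - 1)) < (1 + expVal q d) / q := by
    rw [mul_comm q, ← div_div]
    exact (div_lt_div_iff_of_pos_right hq0).2 hx
  rw [expVal_prep_one hq le_rfl hd, Nat.cast_one, expansions_eq_image_prep_one hq hy,
    mul_div_cancel₀ _ hq0.ne', add_sub_cancel_left, mk_image_eq (prep_one_injective 1)]

end Branching

lemma three_le_mk_of_mem {α : Type*} {s : Set α} {a b c : α} (ha : a ∈ s) (hb : b ∈ s)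
    (hc : c ∈ s) (hab : a ≠ b) (hac : a ≠ c) (hbc : b ≠ c) : 3 ≤ #s := by
  have hsub : ({a, b, c} : Set α) ⊆ s := by
    simp [Set.insert_subset_iff, ha, hb, hc]
  refine le_trans (le_of_eq ?_) (mk_le_mk_of_subset hsub)
  rw [mk_insert (by simp [hab, hac]), mk_insert (by simpa using hbc), mk_singleton]
  norm_num

lemma eps_zero_le_one (i : ℕ) : eps 0 i ≤ 1 := by
  unfold eps; split <;> omega

lemma prep_prep_eps_zero : prep 1 1 (prep 0 1 (eps 0)) = eps 0 := by
  funext i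
  rcases i with _ | _ | i
  · rfl
  · rfl
  · show eps 0 i = eps 0 (i + 2)
    simp only [eps, mul_zero, Nat.not_lt_zero, if_false]
    omega

lemma expVal_eps_zero {q : ℝ} (hq : 1 < q) : expVal q (eps 0) = q / (q ^ 2 - 1) := by
  have hq0 : 0 < q := by linarith
  have hq21 : q ^ 2 - 1 ≠ 0 := by nlinarith
  have h := congrArg (expVal q) prep_prep_eps_zero
  rw [expVal_prep_one hq le_rfl (prep_le_one zero_le_one eps_zero_le_one 1),
    expVal_prep_one hq zero_le_one eps_zero_le_one] at h
  push_cast at h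
  field_simp at h ⊢
  linarith

section RootQ2

variable {q : ℝ}

lemma q2_bounds (hq1 : 1 < q) (hq2 : q < 2) (hq : q ^ 4 = 2 * q ^ 2 + q + 1) :
    1.71 < q ∧ q < 1.72 := by
  constructor <;> nlinarith [sq_nonneg (q ^ 2 - 2.9), sq_nonneg (q - 1)]

lemma expVal_zero_one_eps_zero_gt (hq1 : 1 < q) (hq2 : q < 2)
    (hq : q ^ 4 = 2 * q ^ 2 + q + 1) : 0.6 < expVal q (prep 0 1 (prep 1 1 (eps 0))) := by
  obtain ⟨hlo, hhi⟩ := q2_bounds hq1 hq2 hq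
  have hq0 : 0 < q := by linarith
  have hq21 : 0 < q ^ 2 - 1 := by nlinarith
  rw [expVal_prep_one hq1 zero_le_one (prep_le_one le_rfl eps_zero_le_one 1),
    expVal_prep_one hq1 le_rfl eps_zero_le_one, expVal_eps_zero hq1, lt_div_iff₀ hq0, Nat.cast_zero, zero_add, lt_div_iff₀ hq0, Nat.cast_one]
  have : 0.85 < q / (q ^ 2 - 1) := by rw [lt_div_iff₀ hq21]; nlinarith
  nlinarith

lemma expVal_lt_one_of_head_eq_zero (hq1 : 1 < q) (hq2 : q < 2)
    (hq : q ^ 4 = 2 * q ^ 2 + q + 1) {e : ℕ → ℕ} (he : ∀ i, e i ≤ 1) (he0 : e 0 = 0) :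
    expVal q e < 1 := by
  obtain ⟨hlo, hhi⟩ := q2_bounds hq1 hq2 hq
  have htail_le := (le_div_iff₀ (by linarith)).1 (expVal_le hq1 fun i => he (i + 1))
  rw [expVal_eq_head_add_tail hq1 he, he0, Nat.cast_zero, zero_add, div_lt_one (by linarith)]
  nlinarith

lemma one_div_sub_one_lt_one_add_expVal_of_mk_expansions_eq_two (hq1 : 1 < q) (hq2 : q < 2)
    (hq : q ^ 4 = 2 * q ^ 2 + q + 1) {e : ℕ → ℕ} (he : ∀ i, e i ≤ 1) (he1 : e 1 = 1) {m : ℕ}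
    (htail : (fun i => e (i + m)) = prep 0 1 (prep 1 1 (eps 0)))
    (htwo : #(expansions q (expVal q e)) = 2) : 1 / (q - 1) < 1 + expVal q e := by
  obtain ⟨hlo, hhi⟩ := q2_bounds hq1 hq2 hq
  have hq0 : 0 < q := by linarith
  have hqm : 0 < q - 1 := by linarith
  have hv := expVal_zero_one_eps_zero_gt hq1 hq2 hq
  by_contra! hx
  rw [le_div_iff₀ hqm] at hx
  rcases m with _ | _ | m
  · have he_eq : e = prep 0 1 (prep 1 1 (eps 0)) := htail
    rw [← he_eq] at hv
    nlinarith
  · have he1' := congrFun htail 0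
    simp [prep, he1] at he1'
  · have hswitch : 1 / q ≤ expVal q fun i => e (i + (m + 2)) := by
      rw [htail, div_le_iff₀ hq0]; nlinarith
    obtain ⟨b, hb, hbm, hb_eq⟩ :=
      exists_mem_expansions_digit_eq_one hq1 hq2.le ⟨he, rfl⟩ (m + 2) hswitch
    obtain ⟨c, hc, hc0⟩ := exists_mem_expansions_head_zero hq1 hq2.le (y := q * expVal q e)
      (mul_nonneg hq0.le (expVal_nonneg hq0 e)) (by
        rw [le_div_iff₀ (by positivity)]
        nlinarith [mul_le_mul_of_nonneg_left hx (sq_nonneg q)])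
    have hc' := prep_mem_expansions hq1 zero_le_one hc
    rw [Nat.cast_zero, zero_add, mul_div_cancel_left₀ _ hq0.ne'] at hc'
    have hem : e (m + 2) = 0 := by simpa [prep] using congrFun htail 0
    have hb1 : b 1 = 1 := (hb_eq 1 (by omega)).trans he1
    have := three_le_mk_of_mem (s := expansions q (expVal q e)) ⟨he, rfl⟩ hb hc'
      (fun h => by simp [h, hbm] at hem) (fun h => by simp [h, prep, hc0] at he1)
      (fun h => by simp [h, prep, hc0] at hb1)
    rw [htwo] at this
    norm_num at this

end RootQ2

lemma seqCat_le_one {w : List ℕ} {t : ℕ → ℕ} (hw : ∀ s ∈ w, s ≤ 1) (ht : ∀ i, t i ≤ 1) (i : ℕ) :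
    seqCat w t i ≤ 1 := by
  unfold seqCat
  split_ifs with h
  · rw [List.getD_eq_getElem _ _ h]; exact hw _ (List.getElem_mem _)
  · exact ht _

lemma seqCat_shift_length_sub_two {w : List ℕ} (hw : 2 ≤ w.length) (t : ℕ → ℕ) :
    (fun i => seqCat w t (i + (w.length - 2)))
      = prep (w.getD (w.length - 2) 0) 1 (prep (w.getD (w.length - 1) 0) 1 t) := by
  funext i
  rcases i with _ | _ | i
  · have h : w.length - 2 < w.length := by omega
    simp [seqCat, prep, h]
  · have h : 1 + (w.length - 2) = w.length - 1 := by omega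
    have h' : w.length - 1 < w.length := by omega
    simp [seqCat, prep, h, h']
  · have h : i + 1 + 1 + (w.length - 2) = i + w.length := by omega
    simp [seqCat, prep, h]

/-- let `η_n = d₁⋯d_n(10)^∞` with `n ≥ 2`, `d_{n-1}d_n = 01`, and suppose
`(η_n)_{q₂}` has exactly two `q₂`-expansions. If `d₁d₂ = 01` then both `(0η_n)_{q₂}` and
`(1η_n)_{q₂}` have exactly two `q₂`-expansions. -/
theorem stmt11 (q2 : ℝ) (hq2 : q2 ∈ Set.Ioo (1 : ℝ) 2)
    (hq2r : q2 ^ 4 = 2 * q2 ^ 2 + q2 + 1)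
    (n : ℕ) (hn : 2 ≤ n) (w : List ℕ) (hlen : w.length = n) (hdig : ∀ s ∈ w, s ≤ 1)
    (hend : w.getD (n - 2) 0 = 0 ∧ w.getD (n - 1) 0 = 1)
    (hstart : w.getD 0 0 = 0 ∧ w.getD 1 0 = 1)
    (htwo : Cardinal.mk ↥(expansions q2 (expVal q2 (seqCat w (eps 0)))) = 2) :
    Cardinal.mk ↥(expansions q2 (expVal q2 (prep 0 1 (seqCat w (eps 0))))) = 2 ∧
      Cardinal.mk ↥(expansions q2 (expVal q2 (prep 1 1 (seqCat w (eps 0))))) = 2 := by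
  obtain ⟨hq1, hq2⟩ := hq2
  have hdigits := seqCat_le_one hdig eps_zero_le_one
  have hhead : ∀ i < n, seqCat w (eps 0) i = w.getD i 0 := fun i hi => by
    simp [seqCat, hlen, hi]
  have htail := seqCat_shift_length_sub_two (hlen ▸ hn) (eps 0)
  rw [hlen, hend.1, hend.2] at htail
  rw [mk_expansions_prep_zero hq1 hdigits
      (expVal_lt_one_of_head_eq_zero hq1 hq2 hq2r hdigits ((hhead 0 (by omega)).trans hstart.1)),
    mk_expansions_prep_one hq1 hdigits
      (one_div_sub_one_lt_one_add_expVal_of_mk_expansions_eq_two hq1 hq2 hq2r hdigits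
        ((hhead 1 (by omega)).trans hstart.2) htail htwo)]
  exact ⟨htwo, htwo⟩
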